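/- Let s ∈ (0,1) and v ∈ W^{1,∞}(ℝ²) with supp(v) ⊂ B₁(0). Then there exists a constant C > 0 depending only on s and ‖v‖_{W^{1,∞}} such that |D_y^s v(x,y)| ≤ C min{1, (x²+y²)^{-(1+2s)/4}} for all (x,y) ∈ ℝ², where |D_y^s v(x,y)|² = (C(s)/2) ∫_ℝ |v(x,y)-v(x,z)|²/|y-z|^{1+2s} dz. -/

import Mathlib

open MeasureTheory
open scoped ENNReal NNReal

/-!
The Lipschitz bound and the sup bound give `|v(x,y) - v(x,z)|² ≲ min(|y - z|², 1)`, and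
`min(t², 1) / |t|^{1+2s}` is integrable for `0 < s < 1`, so `|D_y^s v|²` is bounded.
For `(x,y)` far from the unit ball, `v(x,y) = 0`, the slice `z ↦ v(x,z)` vanishes unless
`|x| < 1`, and then only `z ∈ [-1,1]` contributes, with `|y - z| ≥ |y|/2 ≳ |(x,y)|`;
this gives the decay `|(x,y)|^{-(1+2s)}`.
-/

/-- The squared fractional gradient in the `y`-variable,
`|D_y^s w(x,y)|² = (C(s)/2) ∫ |w(x,y)-w(x,z)|²/|y-z|^{1+2s} dz`, with
`C(s) = (∫ (1-cos ζ)/|ζ|^{1+2s} dζ)⁻¹`, valued in `ℝ≥0∞`. -/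
noncomputable def fracGradSq (s : ℝ) (w : ℝ × ℝ → ℝ) (p : ℝ × ℝ) : ENNReal :=
  ENNReal.ofReal ((∫ ζ : ℝ, (1 - Real.cos ζ) / |ζ| ^ (1 + 2 * s))⁻¹ / 2) *
    ∫⁻ z : ℝ, ENNReal.ofReal ((w p - w (p.1, z)) ^ 2 / |p.2 - z| ^ (1 + 2 * s))

lemma integrable_min_sq_one_div_abs_rpow {s : ℝ} (hs0 : 0 < s) (hs1 : s < 1) :
    Integrable (fun t : ℝ => min (t ^ 2) 1 / |t| ^ (1 + 2 * s)) := by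
  have hmeas : Measurable fun t : ℝ => min (t ^ 2) 1 / |t| ^ (1 + 2 * s) := by fun_prop
  refine LocallyIntegrable.integrable_of_isBigO_atTop_of_norm_isNegInvariant
    (g := fun t : ℝ => t ^ (-(1 + 2 * s))) ?_ (ae_of_all _ fun t => by simp)
    ?_ (integrableAtFilter_rpow_atTop_iff.mpr (by linarith))
  · refine locallyIntegrable_of_norm_le_rpow (C := 1) (α := 2 * s - 1) (by simp)
      (by simp; linarith) (ae_of_all _ fun t => ?_) hmeas.aestronglyMeasurable
    rcases eq_or_ne t 0 with rfl | ht
    · simp [Real.zero_rpow (by linarith : (1 : ℝ) + 2 * s ≠ 0)]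
      positivity
    · have ht' : 0 < |t| := abs_pos.mpr ht
      calc ‖min (t ^ 2) 1 / |t| ^ (1 + 2 * s)‖ = min (t ^ 2) 1 / |t| ^ (1 + 2 * s) :=
            Real.norm_of_nonneg (by positivity)
        _ ≤ |t| ^ (2 : ℝ) / |t| ^ (1 + 2 * s) := by
            gcongr
            rw [Real.rpow_two, sq_abs]
            exact min_le_left _ _
        _ = 1 * ‖t‖ ^ (-(2 * s - 1)) := by
            rw [← Real.rpow_sub ht', Real.norm_eq_abs, one_mul]
            ring_nf
  · refine Asymptotics.IsBigO.of_bound 1 ?_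
    filter_upwards [Filter.eventually_ge_atTop 1] with t ht
    have ht0 : 0 < t := one_pos.trans_le ht
    rw [Real.norm_of_nonneg (by positivity), Real.norm_of_nonneg (by positivity), one_mul,
      min_eq_right (one_le_pow₀ ht), abs_of_pos ht0, Real.rpow_neg ht0.le, one_div]

lemma sq_sub_le_mul_min_sq_one {f : ℝ → ℝ} {K : ℝ≥0} {M : ℝ} (hf : LipschitzWith K f)
    (hbd : ∀ z, |f z| ≤ M) (y z : ℝ) :
    (f y - f z) ^ 2 ≤ (K ^ 2 + 4 * M ^ 2) * min ((y - z) ^ 2) 1 := by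
  rcases le_total ((y - z) ^ 2) 1 with h | h
  · have hlip : |f y - f z| ≤ K * |y - z| := by
      simpa only [Real.dist_eq] using hf.dist_le_mul y z
    rw [min_eq_left h]
    calc (f y - f z) ^ 2 ≤ (K * |y - z|) ^ 2 := sq_le_sq' (abs_le.mp hlip).1 (abs_le.mp hlip).2
      _ = K ^ 2 * (y - z) ^ 2 := by rw [mul_pow, sq_abs]
      _ ≤ _ := by gcongr; nlinarith
  · rw [min_eq_right h]
    have := abs_le.mp (hbd y)
    have := abs_le.mp (hbd z)
    nlinarith [sq_nonneg (K : ℝ)]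

noncomputable def gagliardoDensity (s : ℝ) (f : ℝ → ℝ) (y : ℝ) : ℝ≥0∞ :=
  ∫⁻ z, ENNReal.ofReal ((f y - f z) ^ 2 / |y - z| ^ (1 + 2 * s))

theorem gagliardoDensity_le_of_lipschitzWith {s : ℝ} (hs0 : 0 < s) (hs1 : s < 1)
    {f : ℝ → ℝ} {K : ℝ≥0} {M : ℝ} (hf : LipschitzWith K f) (hbd : ∀ z, |f z| ≤ M) (y : ℝ) :
    gagliardoDensity s f y ≤ ENNReal.ofReal
      ((K ^ 2 + 4 * M ^ 2) * ∫ t, min (t ^ 2) 1 / |t| ^ (1 + 2 * s)) := by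
  set g : ℝ → ℝ := fun t => (K ^ 2 + 4 * M ^ 2) * (min (t ^ 2) 1 / |t| ^ (1 + 2 * s))
  calc gagliardoDensity s f y ≤ ∫⁻ z, ENNReal.ofReal (g (y - z)) := by
        refine lintegral_mono fun z => ENNReal.ofReal_le_ofReal ?_
        simp only [g, mul_div_assoc']
        gcongr
        exact sq_sub_le_mul_min_sq_one hf hbd y z
    _ = ∫⁻ t, ENNReal.ofReal (g t) :=
        lintegral_sub_left_eq_self (fun t => ENNReal.ofReal (g t)) y
    _ = ENNReal.ofReal (∫ t, g t) :=
        (ofReal_integral_eq_lintegral_ofReal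
          ((integrable_min_sq_one_div_abs_rpow hs0 hs1).const_mul _)
          (ae_of_all _ fun t => by positivity)).symm
    _ = _ := by rw [integral_const_mul]

theorem gagliardoDensity_le_of_eq_zero_of_one_le_abs {s : ℝ} (hs : 0 ≤ 1 + 2 * s)
    {f : ℝ → ℝ} {M : ℝ} (hbd : ∀ z, |f z| ≤ M) (hsupp : ∀ z, 1 ≤ |z| → f z = 0)
    {y : ℝ} (hy : 2 ≤ |y|) :
    gagliardoDensity s f y ≤ ENNReal.ofReal (2 ^ (2 + 2 * s) * M ^ 2 / |y| ^ (1 + 2 * s)) := by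
  have hy0 : 0 < |y| := by linarith
  have hpt : ∀ z, ENNReal.ofReal ((f y - f z) ^ 2 / |y - z| ^ (1 + 2 * s)) ≤
      (Set.Icc (-1) 1).indicator (fun _ => ENNReal.ofReal (M ^ 2 / (|y| / 2) ^ (1 + 2 * s))) z := by
    intro z
    by_cases hz : z ∈ Set.Icc (-1 : ℝ) 1
    · rw [Set.indicator_of_mem hz, hsupp y (by linarith), zero_sub, neg_sq]
      have hz1 : |z| ≤ 1 := abs_le.mpr hz
      have hyz : |y| / 2 ≤ |y - z| := by linarith [abs_sub_abs_le_abs_sub y z]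
      have hfz : f z ^ 2 ≤ M ^ 2 := sq_le_sq' (abs_le.mp (hbd z)).1 (abs_le.mp (hbd z)).2
      exact ENNReal.ofReal_le_ofReal (div_le_div₀ (by positivity) hfz (by positivity) (by gcongr))
    · have hz1 : 1 ≤ |z| := by
        rw [Set.mem_Icc, ← abs_le] at hz
        exact (not_le.mp hz).le
      rw [Set.indicator_of_notMem hz, hsupp y (by linarith), hsupp z hz1]
      simp
  calc gagliardoDensity s f y ≤ ∫⁻ z, (Set.Icc (-1) 1).indicator
        (fun _ => ENNReal.ofReal (M ^ 2 / (|y| / 2) ^ (1 + 2 * s))) z := lintegral_mono hpt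
    _ = ENNReal.ofReal (M ^ 2 / (|y| / 2) ^ (1 + 2 * s)) * ENNReal.ofReal 2 := by
        rw [lintegral_indicator measurableSet_Icc, setLIntegral_const, Real.volume_Icc]
        norm_num
    _ = _ := by
        rw [← ENNReal.ofReal_mul (by positivity), Real.div_rpow hy0.le zero_le_two,
          show (2 : ℝ) ^ (2 + 2 * s) = 2 ^ (1 + 2 * s) * 2 by
            rw [show (2 : ℝ) + 2 * s = (1 + 2 * s) + 1 by ring, Real.rpow_add_one two_ne_zero]]
        congr 1
        field_simp

noncomputable def fracNormConst (s : ℝ) : ℝ :=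
  (∫ ζ : ℝ, (1 - Real.cos ζ) / |ζ| ^ (1 + 2 * s))⁻¹ / 2

lemma fracNormConst_nonneg (s : ℝ) : 0 ≤ fracNormConst s :=
  div_nonneg (inv_nonneg.mpr <| integral_nonneg fun ζ =>
    div_nonneg (sub_nonneg.mpr (Real.cos_le_one ζ)) (by positivity)) zero_le_two

lemma fracGradSq_eq (s : ℝ) (w : ℝ × ℝ → ℝ) (p : ℝ × ℝ) :
    fracGradSq s w p =
      ENNReal.ofReal (fracNormConst s) * gagliardoDensity s (fun z => w (p.1, z)) p.2 :=
  rfl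

lemma fracGradSq_le_of_gagliardoDensity_le {s X : ℝ} {w : ℝ × ℝ → ℝ} {p : ℝ × ℝ}
    (h : gagliardoDensity s (fun z => w (p.1, z)) p.2 ≤ ENNReal.ofReal X) :
    fracGradSq s w p ≤ ENNReal.ofReal (fracNormConst s * X) := by
  rw [fracGradSq_eq, ENNReal.ofReal_mul (fracNormConst_nonneg s)]
  gcongr

section Plane

variable {s : ℝ} {v : ℝ × ℝ → ℝ} {M : ℝ}

theorem fracGradSq_le_of_lipschitzWith (hs0 : 0 < s) (hs1 : s < 1) {K : ℝ≥0}
    (hlip : LipschitzWith K v) (hbd : ∀ p, |v p| ≤ M) (p : ℝ × ℝ) :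
    fracGradSq s v p ≤ ENNReal.ofReal (fracNormConst s *
      ((K ^ 2 + 4 * M ^ 2) * ∫ t, min (t ^ 2) 1 / |t| ^ (1 + 2 * s))) :=
  fracGradSq_le_of_gagliardoDensity_le <| gagliardoDensity_le_of_lipschitzWith hs0 hs1
    (mul_one K ▸ hlip.comp (LipschitzWith.prodMk_left p.1)) (fun _ => hbd _) p.2

theorem fracGradSq_le_of_eq_zero_outside_ball (hs : 0 ≤ 1 + 2 * s) (hbd : ∀ p, |v p| ≤ M)
    (hsupp : ∀ p : ℝ × ℝ, 1 ≤ p.1 ^ 2 + p.2 ^ 2 → v p = 0) {p : ℝ × ℝ}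
    (hp : 8 ≤ p.1 ^ 2 + p.2 ^ 2) :
    fracGradSq s v p ≤ ENNReal.ofReal (fracNormConst s * 2 ^ (2 + 2 * s) * M ^ 2 *
      2 ^ ((1 + 2 * s) / 2) / (p.1 ^ 2 + p.2 ^ 2) ^ ((1 + 2 * s) / 2)) := by
  obtain ⟨x, y⟩ := p
  dsimp only at hp ⊢
  rcases le_or_gt 1 (x ^ 2) with hx | hx
  · have hslice : ∀ z, v (x, z) = 0 := fun z => hsupp _ (by dsimp only; nlinarith [sq_nonneg z])
    simp [fracGradSq_eq, gagliardoDensity, hslice]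
  have hslice : ∀ z, 1 ≤ |z| → v (x, z) = 0 := fun z hz =>
    hsupp _ (by dsimp only; nlinarith [sq_abs z, sq_nonneg x])
  have hy : 2 ≤ |y| := by nlinarith [sq_abs y, abs_nonneg y]
  have hyρ : (x ^ 2 + y ^ 2) / 2 ≤ |y| ^ 2 := by nlinarith [sq_abs y]
  refine (fracGradSq_le_of_gagliardoDensity_le (p := (x, y))
    (gagliardoDensity_le_of_eq_zero_of_one_le_abs hs (fun _ => hbd _) hslice hy)).trans
    (ENNReal.ofReal_le_ofReal ?_)
  have hpow :
      (x ^ 2 + y ^ 2) ^ ((1 + 2 * s) / 2) / 2 ^ ((1 + 2 * s) / 2) ≤ |y| ^ (1 + 2 * s) := by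
    calc (x ^ 2 + y ^ 2) ^ ((1 + 2 * s) / 2) / 2 ^ ((1 + 2 * s) / 2)
        = ((x ^ 2 + y ^ 2) / 2) ^ ((1 + 2 * s) / 2) :=
          (Real.div_rpow (by positivity) zero_le_two _).symm
      _ ≤ (|y| ^ 2) ^ ((1 + 2 * s) / 2) := by gcongr
      _ = |y| ^ (1 + 2 * s) := by
        rw [← Real.rpow_natCast, ← Real.rpow_mul (abs_nonneg y)]
        ring_nf
  have hρ : 0 < (x ^ 2 + y ^ 2) ^ ((1 + 2 * s) / 2) / 2 ^ ((1 + 2 * s) / 2) := by positivity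
  have := fracNormConst_nonneg s
  calc fracNormConst s * (2 ^ (2 + 2 * s) * M ^ 2 / |y| ^ (1 + 2 * s))
      ≤ fracNormConst s * (2 ^ (2 + 2 * s) * M ^ 2 /
          ((x ^ 2 + y ^ 2) ^ ((1 + 2 * s) / 2) / 2 ^ ((1 + 2 * s) / 2))) := by gcongr
    _ = _ := by rw [div_div_eq_mul_div]; ring

end Plane

lemma le_ofReal_div_max_one_rpow {F : ℝ≥0∞} {A D E R ρ a : ℝ} (hA : 0 ≤ A) (hD : 0 ≤ D)
    (hR : 1 ≤ R) (hρ : 0 ≤ ρ) (ha : 0 ≤ a) (hE : A * R ^ a + D ≤ E)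
    (hnear : F ≤ ENNReal.ofReal A) (hfar : R ≤ ρ → F ≤ ENNReal.ofReal (D / ρ ^ a)) :
    F ≤ ENNReal.ofReal (E / max 1 (ρ ^ a)) := by
  rcases le_total ρ R with h | h
  · refine hnear.trans (ENNReal.ofReal_le_ofReal ?_)
    have hmax : max 1 (ρ ^ a) ≤ R ^ a :=
      max_le (Real.one_le_rpow hR ha) (Real.rpow_le_rpow hρ h ha)
    rw [le_div_iff₀ (by positivity)]
    nlinarith
  · refine (hfar h).trans (ENNReal.ofReal_le_ofReal ?_)
    rw [max_eq_right (Real.one_le_rpow (hR.trans h) ha)]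
    have : 0 ≤ A * R ^ a := by positivity
    gcongr
    linarith

lemma rpow_half_le_ofReal_sqrt_div {F : ℝ≥0∞} {E ρ b : ℝ} (hE : 0 ≤ E) (hρ : 0 ≤ ρ)
    (h : F ≤ ENNReal.ofReal (E / max 1 (ρ ^ (2 * b)))) :
    F ^ (1 / 2 : ℝ) ≤ ENNReal.ofReal (√E / max 1 (ρ ^ b)) := by
  have hmax : max 1 (ρ ^ (2 * b)) = max 1 (ρ ^ b) ^ 2 := by
    have hb : 0 ≤ ρ ^ b := Real.rpow_nonneg hρ b
    rw [mul_comm, Real.rpow_mul hρ, Real.rpow_two]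
    rcases le_total 1 (ρ ^ b) with h1 | h1
    · rw [max_eq_right h1, max_eq_right (one_le_pow₀ h1)]
    · rw [max_eq_left h1, max_eq_left (pow_le_one₀ hb h1), one_pow]
  rw [hmax] at h
  calc F ^ (1 / 2 : ℝ) ≤ ENNReal.ofReal (E / max 1 (ρ ^ b) ^ 2) ^ (1 / 2 : ℝ) := by gcongr
    _ = ENNReal.ofReal (√E / max 1 (ρ ^ b)) := by
      rw [ENNReal.ofReal_rpow_of_nonneg (by positivity) (by norm_num), ← Real.sqrt_eq_rpow,
        Real.sqrt_div' _ (by positivity), Real.sqrt_sq (by positivity)]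

/-- For `s ∈ (0,1)` and `v ∈ W^{1,∞}(ℝ²)` (bounded Lipschitz)
supported in the open unit Euclidean ball, there is `C > 0` (depending only on `s`
and the `W^{1,∞}` data) with
`|D_y^s v(x,y)| ≤ C min{1, (x²+y²)^{-(1+2s)/4}}` for all `(x,y) ∈ ℝ²`;
the right-hand side is written as `C / max 1 ((x²+y²)^{(1+2s)/4})`. -/
theorem fracGrad_decay_of_compact_support
    (s : ℝ) (hs : s ∈ Set.Ioo (0 : ℝ) 1)
    (v : ℝ × ℝ → ℝ)
    (K : NNReal) (hlip : LipschitzWith K v)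
    (M : ℝ) (hbd : ∀ p : ℝ × ℝ, |v p| ≤ M)
    (hsupp : ∀ p : ℝ × ℝ, 1 ≤ p.1 ^ 2 + p.2 ^ 2 → v p = 0) :
    ∃ C : ℝ, 0 < C ∧ ∀ p : ℝ × ℝ,
      (fracGradSq s v p) ^ ((1 : ℝ) / 2)
        ≤ ENNReal.ofReal (C / max 1 ((p.1 ^ 2 + p.2 ^ 2) ^ ((1 + 2 * s) / 4))) := by
  obtain ⟨hs0, hs1⟩ := hs
  set A := fracNormConst s * ((K ^ 2 + 4 * M ^ 2) * ∫ t, min (t ^ 2) 1 / |t| ^ (1 + 2 * s))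
  set D := fracNormConst s * 2 ^ (2 + 2 * s) * M ^ 2 * 2 ^ ((1 + 2 * s) / 2)
  have hc := fracNormConst_nonneg s
  have hA : 0 ≤ A :=
    mul_nonneg hc (mul_nonneg (by positivity) (integral_nonneg fun t => by positivity))
  have hD : 0 ≤ D := by positivity
  set E := A * 8 ^ ((1 + 2 * s) / 2) + D + 1
  refine ⟨√E, Real.sqrt_pos.mpr (by positivity), fun p => ?_⟩
  refine rpow_half_le_ofReal_sqrt_div (by positivity) (by positivity) ?_
  rw [show 2 * ((1 + 2 * s) / 4) = (1 + 2 * s) / 2 by ring]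
  exact le_ofReal_div_max_one_rpow hA hD (by norm_num) (by positivity) (by positivity)
    (by linarith) (fracGradSq_le_of_lipschitzWith hs0 hs1 hlip hbd p)
    (fracGradSq_le_of_eq_zero_outside_ball (by linarith) hbd hsupp)
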